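/- If GMRES applied to A x = b with initial guess x_0 produces iterate x_{jp-1}^G, and aAA(∞)[1]--FP[t] (full-window alternating Anderson with one AA step every period p = t+1) produces iterate x_{jp}, and the GMRES residual norms are strictly decreasing up to iteration k_0, then x_{jp} = q(x_{jp-1}^G) for all jp < k_0, where q(x) = M x + b, M = I - A. Consequently the aAA residual satisfies r_{jp} = M r_{jp-1}^G. -/

import Mathlib

noncomputable def e2norm {n : ℕ} (v : Fin n → ℝ) : ℝ :=
  ‖(WithLp.equiv 2 (Fin n → ℝ)).symm v‖

/-!
Write `r₀ = f - A x₀` and `K_k` for the Krylov spaces `K_k(A, r₀)`. Strict decrease of the GMRES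
residuals forces `A^m r₀ ∉ K_m` for `m < k₀`; hence `A` is injective on `K_m`, and multiplication
by `A` raises the Krylov degree of a vector by exactly one. Since
`q(y) - x₀ = (y - x₀) + r₀ - A (y - x₀)`, so does `q`, and by induction `x_k - x₀` has Krylov
degree exactly `k - 1`. The differences mixed by a full-window Anderson step at iteration `k`
therefore span `K_{k-1}`: that step minimises the same residual over the same affine space
`x₀ + K_{k-1}` as GMRES. Least-squares solutions are unique (strict convexity of the Euclidean
norm and injectivity of `A` on `K_{k-1}`), so the mixed iterate is `x^G_{k-1}` and
`x_k = q(x^G_{k-1})`.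
-/

open Matrix Submodule

section Span

variable {K V : Type*} [DivisionRing K] [AddCommGroup V] [Module K V]

theorem span_range_fin_succ (g : ℕ → V) (m : ℕ) :
    span K (Set.range fun i : Fin (m + 1) => g i) =
      K ∙ g m ⊔ span K (Set.range fun i : Fin m => g i) := by
  rw [← span_insert]
  congr 1
  ext v
  simp [Fin.exists_fin_succ', eq_comm, or_comm]

theorem span_singleton_sup_eq_of_mem_of_notMem {U : Submodule K V} {g w : V}
    (hw : w ∈ K ∙ g ⊔ U) (hwU : w ∉ U) : K ∙ w ⊔ U = K ∙ g ⊔ U := by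
  have hspan : ∀ v : V, span K (insert v (U : Set V)) = K ∙ v ⊔ U := fun v => by
    rw [span_insert, span_eq]
  rw [← hspan] at hw
  refine le_antisymm (sup_le ((span_singleton_le_iff_mem _ _).2 (hspan g ▸ hw)) le_sup_right)
    (sup_le ((span_singleton_le_iff_mem _ _).2 ?_) le_sup_right)
  rw [← hspan]
  exact mem_span_insert_exchange hw (by rwa [span_eq])

end Span

section Extrapolation

variable {R ι κ : Type*} [CommRing R] [Fintype ι] {m : ℕ}

theorem sub_mulVec_add_sum_smul_sub (A : Matrix κ ι R) (f : κ → R) (y : ι → R)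
    (z : Fin m → ι → R) (γ : Fin m → R) :
    f - A *ᵥ (y + ∑ i, γ i • (y - z i)) =
      f - A *ᵥ y + ∑ i, γ i • (f - A *ᵥ y - (f - A *ᵥ z i)) := by
  simp only [mulVec_add, mulVec_sum, mulVec_smul, mulVec_sub, sub_sub_sub_cancel_left,
    smul_sub, Finset.sum_sub_distrib]
  abel

theorem mulVec_add_sum_smul_sub_add (M : Matrix κ ι R) (f : κ → R) (y : ι → R)
    (z : Fin m → ι → R) (γ : Fin m → R) :
    M *ᵥ (y + ∑ i, γ i • (y - z i)) + f =
      M *ᵥ y + f + ∑ i, γ i • (M *ᵥ y + f - (M *ᵥ z i + f)) := by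
  simp only [mulVec_add, mulVec_sum, mulVec_smul, mulVec_sub, add_sub_add_right_eq_sub]
  abel

variable [DecidableEq ι] {A M : Matrix ι ι R}

theorem richardson_sub_eq (hM : M = 1 - A) (f x₀ y : ι → R) :
    M *ᵥ y + f - x₀ = y - x₀ + (f - A *ᵥ x₀) - A *ᵥ (y - x₀) := by
  rw [hM, sub_mulVec, one_mulVec, mulVec_sub]
  abel

theorem sub_mulVec_richardson (hM : M = 1 - A) (f y : ι → R) :
    f - A *ᵥ (M *ᵥ y + f) = M *ᵥ (f - A *ᵥ y) := by
  rw [hM]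
  simp only [sub_mulVec, one_mulVec, mulVec_sub, mulVec_add, mulVec_mulVec, sub_mul, one_mul]
  abel

end Extrapolation

section Krylov

variable {K ι : Type*} [Field K] [Fintype ι] [DecidableEq ι]

def krylov (A : Matrix ι ι K) (r : ι → K) (k : ℕ) : Submodule K (ι → K) :=
  span K (Set.range fun i : Fin k => (A ^ (i : ℕ)) *ᵥ r)

/-- `v = p(A) r` with `deg p = m`. -/
def IsKrylovDegree (A : Matrix ι ι K) (r v : ι → K) (m : ℕ) : Prop :=
  v ∈ krylov A r (m + 1) ∧ v ∉ krylov A r m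

variable {A : Matrix ι ι K} {r : ι → K}

theorem exists_eq_add_sum_iff_sub_mem_krylov {k : ℕ} {x₀ y : ι → K} :
    (∃ c : Fin k → K, y = x₀ + ∑ i : Fin k, c i • (A ^ (i : ℕ)) *ᵥ r) ↔
      y - x₀ ∈ krylov A r k := by
  simp only [krylov, mem_span_range_iff_exists_fun, eq_comm (a := y), ← eq_sub_iff_add_eq']

@[simp]
theorem krylov_zero : krylov A r 0 = ⊥ := by
  simp [krylov]

theorem krylov_succ (m : ℕ) : krylov A r (m + 1) = K ∙ (A ^ m) *ᵥ r ⊔ krylov A r m :=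
  span_range_fin_succ (fun i => (A ^ i) *ᵥ r) m

theorem krylov_mono : Monotone (krylov A r) :=
  monotone_nat_of_le_succ fun m => (krylov_succ (A := A) (r := r) m).symm ▸ le_sup_right

theorem self_mem_krylov {m : ℕ} (hm : 0 < m) : r ∈ krylov A r m :=
  subset_span ⟨⟨0, hm⟩, by simp⟩

theorem mulVec_mem_krylov_succ {m : ℕ} {u : ι → K} (hu : u ∈ krylov A r m) :
    A *ᵥ u ∈ krylov A r (m + 1) := by
  induction m generalizing u with
  | zero => simp_all
  | succ m ih =>
    rw [krylov_succ] at hu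
    obtain ⟨v, hv, w, hw, rfl⟩ := mem_sup.1 hu
    obtain ⟨c, rfl⟩ := mem_span_singleton.1 hv
    rw [mulVec_add, mulVec_smul, mulVec_mulVec, ← pow_succ', krylov_succ]
    exact add_mem (mem_sup_left (smul_mem _ _ (mem_span_singleton_self _)))
      (mem_sup_right (ih hw))

namespace IsKrylovDegree

variable {u v : ι → K} {m : ℕ}

theorem pow_mulVec_notMem (hu : IsKrylovDegree A r u m) : (A ^ m) *ᵥ r ∉ krylov A r m :=
  fun h => hu.2 <|
    (krylov_succ (A := A) (r := r) m ▸ sup_le ((span_singleton_le_iff_mem _ _).2 h) le_rfl) hu.1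

theorem sub_left (hu : IsKrylovDegree A r u m) (hv : v ∈ krylov A r m) :
    IsKrylovDegree A r (v - u) m :=
  ⟨sub_mem (krylov_mono m.le_succ hv) hu.1, fun h => hu.2 (by simpa using sub_mem hv h)⟩

theorem mulVec (hu : IsKrylovDegree A r u m) (hA : (A ^ (m + 1)) *ᵥ r ∉ krylov A r (m + 1)) :
    IsKrylovDegree A r (A *ᵥ u) (m + 1) := by
  refine ⟨mulVec_mem_krylov_succ hu.1, fun hAu => hA ?_⟩
  obtain ⟨v, hv, w, hw, hvw⟩ := mem_sup.1 (krylov_succ (A := A) (r := r) m ▸ hu.1)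
  obtain ⟨c, rfl⟩ := mem_span_singleton.1 hv
  have hc : c ≠ 0 := by
    rintro rfl
    exact hu.2 (by simpa [← hvw] using hw)
  rw [← hvw, mulVec_add, mulVec_smul, mulVec_mulVec, ← pow_succ'] at hAu
  have hmem := sub_mem hAu (mulVec_mem_krylov_succ hw)
  rwa [add_sub_cancel_right, smul_mem_iff _ hc] at hmem

theorem richardson {M : Matrix ι ι K} (hM : M = 1 - A) {f x₀ y : ι → K}
    (hy : IsKrylovDegree A (f - A *ᵥ x₀) (y - x₀) m)
    (hA : (A ^ (m + 1)) *ᵥ (f - A *ᵥ x₀) ∉ krylov A (f - A *ᵥ x₀) (m + 1)) :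
    IsKrylovDegree A (f - A *ᵥ x₀) (M *ᵥ y + f - x₀) (m + 1) := by
  rw [richardson_sub_eq hM]
  exact (hy.mulVec hA).sub_left (add_mem hy.1 (self_mem_krylov m.succ_pos))

end IsKrylovDegree

theorem eq_zero_of_mem_krylov_of_mulVec_eq_zero {m : ℕ}
    (hA : ∀ i < m, (A ^ (i + 1)) *ᵥ r ∉ krylov A r (i + 1)) {u : ι → K}
    (hu : u ∈ krylov A r m) (hAu : A *ᵥ u = 0) : u = 0 := by
  induction m with
  | zero => simpa using hu
  | succ m ih =>
    refine ih (fun i hi => hA i (by omega)) ?_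
    by_contra hum
    exact (IsKrylovDegree.mulVec ⟨hu, hum⟩ (hA m m.lt_succ_self)).2 (hAu ▸ zero_mem _)

theorem span_range_eq_krylov {d : ℕ → ι → K} {m : ℕ}
    (hd : ∀ j < m, IsKrylovDegree A r (d j) j) :
    span K (Set.range fun j : Fin m => d j) = krylov A r m := by
  induction m with
  | zero => simp [krylov]
  | succ m ih =>
    rw [span_range_fin_succ, ih fun j hj => hd j (by omega), krylov_succ]
    exact span_singleton_sup_eq_of_mem_of_notMem
      (krylov_succ (A := A) m ▸ (hd m m.lt_succ_self).1) (hd m m.lt_succ_self).2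

section Iterates

variable {x : ℕ → ι → K} {m : ℕ} (hx : ∀ j < m, IsKrylovDegree A r (x (j + 1) - x 0) j)
include hx

theorem sub_mem_krylov_of_isKrylovDegree {l : ℕ} (hl : l ≤ m) : x l - x 0 ∈ krylov A r m := by
  rcases l with _ | l
  · simp
  · exact krylov_mono hl (hx l (by omega)).1

theorem span_sub_eq_krylov :
    span K (Set.range fun i : Fin m => x m - x (m - (i + 1))) = krylov A r m := by
  have hmem := fun l => sub_mem_krylov_of_isKrylovDegree hx (l := l)
  apply le_antisymm
  · refine span_le.2 (Set.range_subset_iff.2 fun i => ?_)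
    simpa using sub_mem (hmem m le_rfl) (hmem (m - (i + 1)) (by omega))
  · have hwin : ∀ l ≤ m,
        x m - x l ∈ span K (Set.range fun i : Fin m => x m - x (m - (i + 1))) := by
      intro l hl
      rcases hl.eq_or_lt with rfl | hl
      · simp
      · exact subset_span ⟨⟨m - l - 1, by omega⟩, by simp only; congr 2; omega⟩
    rw [← span_range_eq_krylov hx]
    refine span_le.2 (Set.range_subset_iff.2 fun j => ?_)
    simpa using sub_mem (hwin 0 (by omega)) (hwin (j + 1) (by omega))

end Iterates

end Krylov

theorem Convex.eq_of_forall_norm_sub_le {E : Type*} [NormedAddCommGroup E] [NormedSpace ℝ E]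
    [StrictConvexSpace ℝ E] {s : Set E} (hs : Convex ℝ s) {v a b : E} (ha : a ∈ s) (hb : b ∈ s)
    (hmin : ∀ z ∈ s, ‖v - a‖ ≤ ‖v - z‖) (hba : ‖v - b‖ ≤ ‖v - a‖) : a = b := by
  by_contra hab
  have hmid : (1 / 2 : ℝ) • a + (1 / 2 : ℝ) • b ∈ s :=
    hs ha hb (by norm_num) (by norm_num) (by norm_num)
  have hlt : ‖(1 / 2 : ℝ) • (v - a) + (1 / 2 : ℝ) • (v - b)‖ < ‖v - a‖ :=
    norm_combo_lt_of_ne le_rfl hba (by simpa using hab) (by norm_num) (by norm_num) (by norm_num)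
  refine (hmin _ hmid).not_gt (lt_of_eq_of_lt ?_ hlt)
  congr 1
  module

theorem eq_of_e2norm_sub_mulVec_le {n : ℕ} {A : Matrix (Fin n) (Fin n) ℝ} {f x₀ y₁ y₂ : Fin n → ℝ}
    {W : Submodule ℝ (Fin n → ℝ)} (hinj : ∀ u ∈ W, A *ᵥ u = 0 → u = 0)
    (hy₁ : y₁ - x₀ ∈ W) (hy₂ : y₂ - x₀ ∈ W)
    (hmin : ∀ y, y - x₀ ∈ W → e2norm (f - A *ᵥ y₁) ≤ e2norm (f - A *ᵥ y))
    (hle : e2norm (f - A *ᵥ y₂) ≤ e2norm (f - A *ᵥ y₁)) : y₁ = y₂ := by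
  let T : (Fin n → ℝ) →ₗ[ℝ] EuclideanSpace ℝ (Fin n) :=
    (WithLp.linearEquiv 2 ℝ (Fin n → ℝ)).symm.toLinearMap ∘ₗ A.mulVecLin
  let v := (WithLp.equiv 2 (Fin n → ℝ)).symm (f - A *ᵥ x₀)
  have hnorm : ∀ y, e2norm (f - A *ᵥ y) = ‖v - T (y - x₀)‖ := by
    simp [v, T, e2norm, mulVec_sub]
  have hT : T (y₁ - x₀) = T (y₂ - x₀) := by
    refine (W.map T).convex.eq_of_forall_norm_sub_le (mem_map_of_mem hy₁) (mem_map_of_mem hy₂)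
      ?_ (by rwa [← hnorm, ← hnorm])
    rintro _ ⟨u, hu, rfl⟩
    have h := hmin (u + x₀) (by simpa using hu)
    rwa [hnorm, hnorm, add_sub_cancel_right] at h
  have hdiff := hinj _ (sub_mem hy₁ hy₂) (by simpa [T, mulVec_sub, sub_eq_zero] using hT)
  simpa [sub_eq_zero] using hdiff

theorem Nat.add_one_dvd_add_one_iff_le_mod (t k : ℕ) : t + 1 ∣ k + 1 ↔ t ≤ k % (t + 1) := by
  have hlt := Nat.mod_lt k (by omega : 0 < t + 1)
  conv_lhs => rw [← Nat.div_add_mod k (t + 1), add_assoc]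
  rw [Nat.dvd_add_right (dvd_mul_right _ _)]
  constructor
  · intro hd
    have := Nat.le_of_dvd (by omega) hd
    omega
  · intro h
    rw [show k % (t + 1) + 1 = t + 1 by omega]

section Iteration

variable {n : ℕ} {A M : Matrix (Fin n) (Fin n) ℝ} {f : Fin n → ℝ}

def IsGMRES (A : Matrix (Fin n) (Fin n) ℝ) (f x₀ : Fin n → ℝ) (xG : ℕ → Fin n → ℝ) : Prop :=
  ∀ k, xG k - x₀ ∈ krylov A (f - A *ᵥ x₀) k ∧
    ∀ y, y - x₀ ∈ krylov A (f - A *ᵥ x₀) k → e2norm (f - A *ᵥ xG k) ≤ e2norm (f - A *ᵥ y)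

def IsAndersonStep (A M : Matrix (Fin n) (Fin n) ℝ) (f : Fin n → ℝ) (x : ℕ → Fin n → ℝ)
    (m : ℕ) : Prop :=
  ∃ γ : Fin m → ℝ,
    (∀ γ' : Fin m → ℝ,
      e2norm (f - A *ᵥ x m + ∑ i, γ i • (f - A *ᵥ x m - (f - A *ᵥ x (m - (i + 1))))) ≤
        e2norm (f - A *ᵥ x m + ∑ i, γ' i • (f - A *ᵥ x m - (f - A *ᵥ x (m - (i + 1)))))) ∧
    x (m + 1) = M *ᵥ x m + f + ∑ i, γ i • (M *ᵥ x m + f - (M *ᵥ x (m - (i + 1)) + f))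

namespace IsGMRES

variable {x₀ : Fin n → ℝ} {xG : ℕ → Fin n → ℝ}

theorem zero_eq (hG : IsGMRES A f x₀ xG) : xG 0 = x₀ := by
  simpa [sub_eq_zero] using (hG 0).1

theorem isKrylovDegree (hG : IsGMRES A f x₀ xG) {m : ℕ}
    (hlt : e2norm (f - A *ᵥ xG (m + 1)) < e2norm (f - A *ᵥ xG m)) :
    IsKrylovDegree A (f - A *ᵥ x₀) (xG (m + 1) - x₀) m :=
  ⟨(hG _).1, fun hm => hlt.not_ge ((hG m).2 _ hm)⟩

theorem eq_of_forall_le (hG : IsGMRES A f x₀ xG) {m : ℕ}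
    (hinj : ∀ u ∈ krylov A (f - A *ᵥ x₀) m, A *ᵥ u = 0 → u = 0) {y : Fin n → ℝ}
    (hy : y - x₀ ∈ krylov A (f - A *ᵥ x₀) m)
    (hmin : ∀ y', y' - x₀ ∈ krylov A (f - A *ᵥ x₀) m →
      e2norm (f - A *ᵥ y) ≤ e2norm (f - A *ᵥ y')) :
    y = xG m :=
  eq_of_e2norm_sub_mulVec_le hinj hy (hG m).1 hmin ((hG m).2 y hy)

end IsGMRES

theorem IsAndersonStep.eq_richardson_gmres {x xG : ℕ → Fin n → ℝ} {m : ℕ}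
    (hAA : IsAndersonStep A M f x m) (hG : IsGMRES A f (x 0) xG)
    (hinj : ∀ u ∈ krylov A (f - A *ᵥ x 0) m, A *ᵥ u = 0 → u = 0)
    (hx : ∀ j < m, IsKrylovDegree A (f - A *ᵥ x 0) (x (j + 1) - x 0) j) :
    x (m + 1) = M *ᵥ xG m + f := by
  obtain ⟨γ, hmin, hstep⟩ := hAA
  have hwin := span_sub_eq_krylov hx
  have hxm := sub_mem_krylov_of_isKrylovDegree hx le_rfl
  have hmem : ∀ γ' : Fin m → ℝ,
      x m + ∑ i, γ' i • (x m - x (m - (i + 1))) - x 0 ∈ krylov A (f - A *ᵥ x 0) m := by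
    intro γ'
    rw [add_sub_right_comm, ← hwin]
    exact add_mem (hwin ▸ hxm) ((mem_span_range_iff_exists_fun ℝ).2 ⟨γ', rfl⟩)
  have hgmres : x m + ∑ i, γ i • (x m - x (m - (i + 1))) = xG m := by
    refine hG.eq_of_forall_le hinj (hmem γ) fun y hy => ?_
    obtain ⟨γ', hγ'⟩ := (mem_span_range_iff_exists_fun ℝ).1 (hwin ▸ sub_mem hy hxm :)
    obtain rfl : y = x m + ∑ i, γ' i • (x m - x (m - (i + 1))) := by
      rw [hγ']
      abel
    rw [sub_mulVec_add_sum_smul_sub, sub_mulVec_add_sum_smul_sub]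
    exact hmin γ'
  rw [hstep, ← mulVec_add_sum_smul_sub_add, hgmres]

theorem isKrylovDegree_and_eq_richardson_gmres {x xG : ℕ → Fin n → ℝ} {k₀ : ℕ} (S : ℕ → Prop)
    (hM : M = 1 - A) (hG : IsGMRES A f (x 0) xG)
    (hdec : ∀ j, j + 1 ≤ k₀ → e2norm (f - A *ᵥ xG (j + 1)) < e2norm (f - A *ᵥ xG j))
    (hx1 : x 1 = M *ᵥ x 0 + f)
    (hstep : ∀ k, 1 ≤ k →
      (S k → IsAndersonStep A M f x k) ∧ (¬S k → x (k + 1) = M *ᵥ x k + f)) :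
    ∀ k, k + 1 < k₀ → IsKrylovDegree A (f - A *ᵥ x 0) (x (k + 1) - x 0) k ∧
      (S k → x (k + 1) = M *ᵥ xG k + f) := by
  have hGdeg : ∀ m < k₀, IsKrylovDegree A (f - A *ᵥ x 0) (xG (m + 1) - x 0) m :=
    fun m hm => hG.isKrylovDegree (hdec m hm)
  intro k
  induction k using Nat.strong_induction_on with
  | _ k ih =>
  intro hk
  rcases k with _ | k
  · have hr : x 1 - x 0 = f - A *ᵥ x 0 := by
      rw [hx1, richardson_sub_eq hM]
      simp
    refine ⟨?_, fun _ => by rw [hx1, hG.zero_eq]⟩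
    rw [hr]
    exact ⟨self_mem_krylov one_pos, by simpa using (hGdeg 0 (by omega)).pow_mulVec_notMem⟩
  · have hprev : ∀ j < k + 1, IsKrylovDegree A (f - A *ᵥ x 0) (x (j + 1) - x 0) j :=
      fun j hj => (ih j hj (by omega)).1
    have hA := (hGdeg (k + 1) (by omega)).pow_mulVec_notMem
    by_cases hS : S (k + 1)
    · have hinj : ∀ u ∈ krylov A (f - A *ᵥ x 0) (k + 1), A *ᵥ u = 0 → u = 0 := fun u =>
        eq_zero_of_mem_krylov_of_mulVec_eq_zero
          fun i hi => (hGdeg (i + 1) (by omega)).pow_mulVec_notMem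
      have hx := ((hstep (k + 1) (by omega)).1 hS).eq_richardson_gmres hG hinj hprev
      refine ⟨?_, fun _ => hx⟩
      rw [hx]
      exact (hGdeg k (by omega)).richardson hM hA
    · have hx := (hstep (k + 1) (by omega)).2 hS
      refine ⟨?_, fun h => absurd h hS⟩
      rw [hx]
      exact (hprev k k.lt_succ_self).richardson hM hA

end Iteration

theorem stmt_17_general (n : ℕ) (A M : Matrix (Fin n) (Fin n) ℝ) (hM : M = 1 - A)
    (f : Fin n → ℝ) (t p k₀ : ℕ) (hp : p = t + 1)
    (x xG : ℕ → Fin n → ℝ)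
    -- GMRES: the k-th iterate minimizes the residual over the affine Krylov space
    (hG : ∀ k : ℕ,
      (∃ c : Fin k → ℝ, xG k =
        x 0 + ∑ i : Fin k, c i • (A ^ (i : ℕ)).mulVec (f - A.mulVec (x 0))) ∧
      ∀ y : Fin n → ℝ,
        (∃ c : Fin k → ℝ, y =
          x 0 + ∑ i : Fin k, c i • (A ^ (i : ℕ)).mulVec (f - A.mulVec (x 0))) →
        e2norm (f - A.mulVec (xG k)) ≤ e2norm (f - A.mulVec y))
    -- GMRES residual norms strictly decreasing up to iteration k₀
    (hdec : ∀ j : ℕ, j + 1 ≤ k₀ →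
      e2norm (f - A.mulVec (xG (j + 1))) < e2norm (f - A.mulVec (xG j)))
    -- the aAA(∞)[1]--FP[t] scheme
    (hx1 : x 1 = M.mulVec (x 0) + f)
    (hFP : ∀ k : ℕ, 2 ≤ k → (k - 1) % p < t → x k = M.mulVec (x (k - 1)) + f)
    (hAA : ∀ k : ℕ, 2 ≤ k → t ≤ (k - 1) % p → ∃ γ : Fin (k - 1) → ℝ,
      (∀ γ' : Fin (k - 1) → ℝ,
        e2norm ((f - A.mulVec (x (k - 1))) + ∑ i : Fin (k - 1), γ i •
            ((f - A.mulVec (x (k - 1))) - (f - A.mulVec (x (k - 1 - (i.1 + 1)))))) ≤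
        e2norm ((f - A.mulVec (x (k - 1))) + ∑ i : Fin (k - 1), γ' i •
            ((f - A.mulVec (x (k - 1))) - (f - A.mulVec (x (k - 1 - (i.1 + 1))))))) ∧
      x k = (M.mulVec (x (k - 1)) + f) + ∑ i : Fin (k - 1), γ i •
          ((M.mulVec (x (k - 1)) + f) - (M.mulVec (x (k - 1 - (i.1 + 1))) + f))) :
    ∀ j : ℕ, 1 ≤ j → j * p < k₀ →
      x (j * p) = M.mulVec (xG (j * p - 1)) + f ∧
      f - A.mulVec (x (j * p)) = M.mulVec (f - A.mulVec (xG (j * p - 1))) := by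
  intro j hj hjp
  have hG' : IsGMRES A f (x 0) xG := fun k =>
    ⟨exists_eq_add_sum_iff_sub_mem_krylov.1 (hG k).1,
      fun y hy => (hG k).2 y (exists_eq_add_sum_iff_sub_mem_krylov.2 hy)⟩
  obtain ⟨k, hk⟩ : ∃ k, j * p = k + 1 :=
    ⟨j * p - 1, by have := Nat.mul_le_mul hj (show 1 ≤ p by omega); omega⟩
  have hstep : ∀ k, 1 ≤ k → (p ∣ k + 1 → IsAndersonStep A M f x k) ∧
      (¬p ∣ k + 1 → x (k + 1) = M *ᵥ x k + f) := by
    intro k hk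
    rw [hp, Nat.add_one_dvd_add_one_iff_le_mod, ← hp, not_le]
    exact ⟨hAA (k + 1) (by omega), hFP (k + 1) (by omega)⟩
  have hq := (isKrylovDegree_and_eq_richardson_gmres (p ∣ · + 1) hM hG' hdec hx1 hstep k
    (by omega)).2 (hk ▸ dvd_mul_left p j)
  rw [hk, Nat.add_sub_cancel]
  exact ⟨hq, by rw [hq, sub_mulVec_richardson hM]⟩

/-- Periodic equivalence of aAA(∞)[1]--FP[t] with GMRES: if the GMRES residual norms are
strictly decreasing up to iteration `k₀`, then for every `j ≥ 1` with `j p < k₀`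
(`p = t + 1`), the aAA(∞)[1]--FP[t] iterate satisfies `x_{jp} = q(x_{jp-1}^G)`, and hence
`r_{jp} = M r_{jp-1}^G`. -/
theorem stmt_17 (n : ℕ) (A M : Matrix (Fin n) (Fin n) ℝ) (hM : M = 1 - A)
    (f : Fin n → ℝ) (t p k₀ : ℕ) (ht : 1 ≤ t) (hp : p = t + 1)
    (x xG : ℕ → Fin n → ℝ) (hG0 : xG 0 = x 0)
    -- GMRES: the k-th iterate minimizes the residual over the affine Krylov space
    (hG : ∀ k : ℕ,
      (∃ c : Fin k → ℝ, xG k =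
        x 0 + ∑ i : Fin k, c i • (A ^ (i : ℕ)).mulVec (f - A.mulVec (x 0))) ∧
      ∀ y : Fin n → ℝ,
        (∃ c : Fin k → ℝ, y =
          x 0 + ∑ i : Fin k, c i • (A ^ (i : ℕ)).mulVec (f - A.mulVec (x 0))) →
        e2norm (f - A.mulVec (xG k)) ≤ e2norm (f - A.mulVec y))
    -- GMRES residual norms strictly decreasing up to iteration k₀
    (hdec : ∀ j : ℕ, j + 1 ≤ k₀ →
      e2norm (f - A.mulVec (xG (j + 1))) < e2norm (f - A.mulVec (xG j)))
    -- the aAA(∞)[1]--FP[t] scheme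
    (hx1 : x 1 = M.mulVec (x 0) + f)
    (hFP : ∀ k : ℕ, 2 ≤ k → (k - 1) % p < t → x k = M.mulVec (x (k - 1)) + f)
    (hAA : ∀ k : ℕ, 2 ≤ k → t ≤ (k - 1) % p → ∃ γ : Fin (k - 1) → ℝ,
      (∀ γ' : Fin (k - 1) → ℝ,
        e2norm ((f - A.mulVec (x (k - 1))) + ∑ i : Fin (k - 1), γ i •
            ((f - A.mulVec (x (k - 1))) - (f - A.mulVec (x (k - 1 - (i.1 + 1)))))) ≤
        e2norm ((f - A.mulVec (x (k - 1))) + ∑ i : Fin (k - 1), γ' i •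
            ((f - A.mulVec (x (k - 1))) - (f - A.mulVec (x (k - 1 - (i.1 + 1))))))) ∧
      x k = (M.mulVec (x (k - 1)) + f) + ∑ i : Fin (k - 1), γ i •
          ((M.mulVec (x (k - 1)) + f) - (M.mulVec (x (k - 1 - (i.1 + 1))) + f))) :
    ∀ j : ℕ, 1 ≤ j → j * p < k₀ →
      x (j * p) = M.mulVec (xG (j * p - 1)) + f ∧
      f - A.mulVec (x (j * p)) = M.mulVec (f - A.mulVec (xG (j * p - 1))) :=
  stmt_17_general n A M hM f t p k₀ hp x xG hG hdec hx1 hFP hAA
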